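/- arXiv:2605.18307 — 4 statements merged into one kernel-verified Lean document; each statement's English description precedes it below -/
import Mathlib

section
/- Let α ∈ (0,1). For every continuously differentiable function u : 𝕋 × [0,1] → ℝ with u(θ,0) = 0 for all θ ∈ 𝕋, one has ((1−α)²/4) ∫_𝕋 ∫_0^1 u(θ,r)² dr dθ ≤ ∫_𝕋 ∫_0^1 r^{α} (∂_r u(θ,r))² dr dθ. In particular the Rayleigh quotient (∫_Ω ((∂_θ u)² + r^α (∂_r u)²) dz)/(∫_Ω u² dz) of any nonzero such u is at least (1−α)²/4. -/
/-!
Fix `θ`. The slice `v = u θ` vanishes at `0`, so `v r = ∫₀ʳ v'`, and Cauchy–Schwarz with the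
weight `s ^ α` gives
`v r ^ 2 ≤ (∫₀ʳ s ^ (-α)) (∫₀¹ s ^ α v' ^ 2) = r ^ (1 - α) / (1 - α) · ∫₀¹ s ^ α v' ^ 2`.
Integrating in `r` yields `(1 - α) (2 - α) ∫₀¹ v ^ 2 ≤ ∫₀¹ r ^ α v' ^ 2`, which is stronger than
needed since `(1 - α) ^ 2 / 4 ≤ (1 - α) (2 - α)`. Integrating over `θ` (Fubini applies because the
partial derivatives extend continuously to the closed rectangle) gives the first claim. For the
Rayleigh quotient, `(∂_θ u) ^ 2 ≥ 0` only enlarges the numerator, and the denominator is positive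
because `u` is continuous, `2π`-periodic and not identically zero.
-/

open MeasureTheory Set Function Filter Topology Real

lemma sq_le_mul_of_forall_two_mul_abs_le {x a b : ℝ} (ha : 0 ≤ a) (hb : 0 ≤ b)
    (h : ∀ ε > 0, 2 * ε * |x| ≤ a + ε ^ 2 * b) : x ^ 2 ≤ a * b := by
  have hquad : ∀ ε : ℝ, 0 ≤ b * (ε * ε) + -(2 * |x|) * ε + a := by
    intro ε
    rcases le_or_gt ε 0 with hε | hε
    · nlinarith [mul_nonneg (neg_nonneg.2 hε) (abs_nonneg x), sq_nonneg ε]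
    · nlinarith [h ε hε]
  have hdisc := discrim_le_zero hquad
  rw [discrim] at hdisc
  nlinarith [sq_abs x]

lemma two_mul_abs_le_inv_add_sq_mul {w y : ℝ} (hw : 0 < w) (ε : ℝ) :
    2 * ε * |y| ≤ w⁻¹ + ε ^ 2 * (w * y ^ 2) := by
  have h : 0 ≤ w⁻¹ * (1 - ε * w * |y|) ^ 2 := by positivity
  have hexp : w⁻¹ * (1 - ε * w * |y|) ^ 2 = w⁻¹ + ε ^ 2 * (w * y ^ 2) - 2 * ε * |y| := by
    field_simp
    linear_combination (w ^ 2 * ε ^ 2) * sq_abs y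
  linarith

theorem sq_integral_le_integral_inv_mul_integral_mul_sq {X : Type*} [MeasurableSpace X]
    {μ : Measure X} {f w : X → ℝ} (hw : ∀ᵐ x ∂μ, 0 < w x) (hf : Integrable f μ)
    (hwinv : Integrable (fun x ↦ (w x)⁻¹) μ) (hwf : Integrable (fun x ↦ w x * f x ^ 2) μ) :
    (∫ x, f x ∂μ) ^ 2 ≤ (∫ x, (w x)⁻¹ ∂μ) * ∫ x, w x * f x ^ 2 ∂μ := by
  refine sq_le_mul_of_forall_two_mul_abs_le (integral_nonneg_of_ae ?_)
    (integral_nonneg_of_ae ?_) fun ε hε ↦ ?_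
  · filter_upwards [hw] with x hx using (inv_pos.2 hx).le
  · filter_upwards [hw] with x hx using mul_nonneg hx.le (sq_nonneg _)
  calc 2 * ε * |∫ x, f x ∂μ| ≤ 2 * ε * ∫ x, |f x| ∂μ := by
        gcongr; exact abs_integral_le_integral_abs
    _ = ∫ x, 2 * ε * |f x| ∂μ := (integral_const_mul _ _).symm
    _ ≤ ∫ x, ((w x)⁻¹ + ε ^ 2 * (w x * f x ^ 2)) ∂μ := by
        refine integral_mono_ae (hf.abs.const_mul _) (hwinv.add (hwf.const_mul _)) ?_
        filter_upwards [hw] with x hx using two_mul_abs_le_inv_add_sq_mul hx ε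
    _ = (∫ x, (w x)⁻¹ ∂μ) + ε ^ 2 * ∫ x, w x * f x ^ 2 ∂μ := by
        rw [integral_add hwinv (hwf.const_mul _), integral_const_mul]

lemma integrableOn_of_eqOn_of_continuousOn {X E : Type*} [TopologicalSpace X] [T2Space X]
    [MeasurableSpace X] [OpensMeasurableSpace X] [NormedAddCommGroup E] {μ : Measure X}
    [IsFiniteMeasureOnCompacts μ] {f g : X → E} {s K : Set X} (hK : IsCompact K)
    (hg : ContinuousOn g K) (hsK : s ⊆ K) (hs : MeasurableSet s) (hfg : EqOn g f s) :
    IntegrableOn f s μ :=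
  ((hg.integrableOn_compact hK).mono_set hsK).congr_fun hfg hs

lemma setIntegral_pos_of_continuousOn {X : Type*} [TopologicalSpace X] [MeasurableSpace X]
    [OpensMeasurableSpace X] {μ : Measure X} [μ.IsOpenPosMeasure] {f : X → ℝ} {s : Set X}
    (hs : IsOpen s) (hf : ContinuousOn f s) (hfi : IntegrableOn f s μ)
    (hf0 : ∀ x ∈ s, 0 ≤ f x) {x : X} (hx : x ∈ s) (hfx : f x ≠ 0) :
    0 < ∫ x in s, f x ∂μ := by
  rw [setIntegral_pos_iff_support_of_nonneg_ae
    (ae_restrict_of_forall_mem hs.measurableSet hf0) hfi, inter_comm]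
  exact (hf.isOpen_inter_preimage hs isOpen_compl_singleton).measure_pos μ ⟨x, hx, hfx⟩

lemma integrableOn_setIntegral_prod_left {X Y E : Type*} [MeasurableSpace X]
    [MeasurableSpace Y] [NormedAddCommGroup E] [NormedSpace ℝ E] {μ : Measure X} {ν : Measure Y}
    [SFinite μ] [SFinite ν] {f : X × Y → E} {s : Set X} {t : Set Y}
    (hf : IntegrableOn f (s ×ˢ t) (μ.prod ν)) :
    IntegrableOn (fun x ↦ ∫ y in t, f (x, y) ∂ν) s μ := by
  rw [IntegrableOn, ← Measure.prod_restrict] at hf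
  exact hf.integral_prod_left

section Radial

variable {α : ℝ} {v : ℝ → ℝ}

lemma eqOn_derivWithin_Icc_deriv {a b : ℝ} :
    EqOn (derivWithin v (Icc a b)) (deriv v) (Ioo a b) := fun _ hs ↦
  derivWithin_of_mem_nhds (Icc_mem_nhds hs.1 hs.2)

lemma integrableOn_rpow_mul_deriv_sq (hα : 0 ≤ α) (hv : ContDiffOn ℝ 1 v (Icc 0 1)) :
    IntegrableOn (fun s ↦ s ^ α * deriv v s ^ 2) (Ioo 0 1) :=
  integrableOn_of_eqOn_of_continuousOn isCompact_Icc
    ((continuousOn_id.rpow_const fun _ _ ↦ Or.inr hα).mul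
      ((hv.continuousOn_derivWithin (uniqueDiffOn_Icc zero_lt_one) le_rfl).pow 2))
    Ioo_subset_Icc_self measurableSet_Ioo fun s hs ↦ by
      simp only [Pi.mul_apply, Pi.pow_apply, id, eqOn_derivWithin_Icc_deriv hs]

lemma sq_le_rpow_div_mul_integral (hα0 : 0 ≤ α) (hα1 : α < 1)
    (hv : ContDiffOn ℝ 1 v (Icc 0 1)) (hv0 : v 0 = 0) {r : ℝ} (hr : r ∈ Ioc 0 1) :
    v r ^ 2 ≤ r ^ (1 - α) / (1 - α) * ∫ s in Ioo 0 1, s ^ α * deriv v s ^ 2 := by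
  have hsub : Ioo 0 r ⊆ Ioo 0 1 := Ioo_subset_Ioo_right hr.2
  have hftc : v r = ∫ s in Ioo 0 r, deriv v s := by
    rw [← integral_Ioc_eq_integral_Ioo, ← intervalIntegral.integral_of_le hr.1.le,
      intervalIntegral.integral_deriv_of_contDiffOn_Icc (hv.mono (Icc_subset_Icc_right hr.2))
        hr.1.le, hv0, sub_zero]
  have hderiv : IntegrableOn (deriv v) (Ioo 0 r) :=
    integrableOn_of_eqOn_of_continuousOn isCompact_Icc
      (hv.continuousOn_derivWithin (uniqueDiffOn_Icc zero_lt_one) le_rfl)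
      (hsub.trans Ioo_subset_Icc_self) measurableSet_Ioo
      (eqOn_derivWithin_Icc_deriv.mono hsub)
  have hrpow : ∀ s ∈ Ioo 0 r, (s ^ α)⁻¹ = s ^ (-α) := fun s hs ↦ (rpow_neg hs.1.le α).symm
  have hinv : IntegrableOn (fun s ↦ (s ^ α)⁻¹) (Ioo 0 r) := by
    refine IntegrableOn.congr_fun ?_ (fun s hs ↦ (hrpow s hs).symm) measurableSet_Ioo
    exact ((intervalIntegrable_iff_integrableOn_Ioc_of_le hr.1.le).1
      (intervalIntegral.intervalIntegrable_rpow' (by linarith))).mono_set Ioo_subset_Ioc_self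
  have hinv_eq : ∫ s in Ioo 0 r, (s ^ α)⁻¹ = r ^ (1 - α) / (1 - α) := by
    rw [setIntegral_congr_fun measurableSet_Ioo hrpow, ← integral_Ioc_eq_integral_Ioo,
      ← intervalIntegral.integral_of_le hr.1.le, integral_rpow (Or.inl (by linarith)),
      zero_rpow (by linarith), sub_zero, neg_add_eq_sub]
  calc v r ^ 2 = (∫ s in Ioo 0 r, deriv v s) ^ 2 := by rw [hftc]
    _ ≤ (∫ s in Ioo 0 r, (s ^ α)⁻¹) * ∫ s in Ioo 0 r, s ^ α * deriv v s ^ 2 :=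
        sq_integral_le_integral_inv_mul_integral_mul_sq
          (ae_restrict_of_forall_mem measurableSet_Ioo fun s hs ↦ rpow_pos_of_pos hs.1 α)
          hderiv hinv ((integrableOn_rpow_mul_deriv_sq hα0 hv).mono_set hsub)
    _ ≤ r ^ (1 - α) / (1 - α) * ∫ s in Ioo 0 1, s ^ α * deriv v s ^ 2 := by
        rw [hinv_eq]
        refine mul_le_mul_of_nonneg_left ?_ (div_nonneg (rpow_nonneg hr.1.le _) (by linarith))
        exact setIntegral_mono_set (integrableOn_rpow_mul_deriv_sq hα0 hv)
            (ae_restrict_of_forall_mem measurableSet_Ioo fun s hs ↦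
              mul_nonneg (rpow_nonneg hs.1.le α) (sq_nonneg _))
            hsub.eventuallyLE

theorem mul_integral_sq_le_integral_rpow_mul_deriv_sq (hα0 : 0 ≤ α) (hα1 : α < 1)
    (hv : ContDiffOn ℝ 1 v (Icc 0 1)) (hv0 : v 0 = 0) :
    (1 - α) * (2 - α) * ∫ r in Ioo 0 1, v r ^ 2 ≤ ∫ r in Ioo 0 1, r ^ α * deriv v r ^ 2 := by
  set E := ∫ r in Ioo 0 1, r ^ α * deriv v r ^ 2
  have hpow : IntegrableOn (fun r : ℝ ↦ r ^ (1 - α)) (Ioo 0 1) :=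
    ((intervalIntegrable_iff_integrableOn_Ioc_of_le zero_le_one).1
      (intervalIntegral.intervalIntegrable_rpow' (by linarith))).mono_set Ioo_subset_Ioc_self
  have hbound : ∫ r in Ioo 0 1, v r ^ 2 ≤ ∫ r in Ioo 0 1, r ^ (1 - α) / (1 - α) * E :=
    integral_mono_of_nonneg (ae_of_all _ fun r ↦ sq_nonneg _)
      ((hpow.div_const _).mul_const E)
      (ae_restrict_of_forall_mem measurableSet_Ioo fun r hr ↦
        sq_le_rpow_div_mul_integral hα0 hα1 hv hv0 (Ioo_subset_Ioc_self hr))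
  have hmajorant : ∫ r in Ioo 0 1, r ^ (1 - α) / (1 - α) * E = E / ((1 - α) * (2 - α)) := by
    rw [integral_mul_const, integral_div, ← integral_Ioc_eq_integral_Ioo,
      ← intervalIntegral.integral_of_le zero_le_one, integral_rpow (Or.inl (by linarith)),
      zero_rpow (by linarith), one_rpow]
    field_simp
    ring
  have hc : 0 < (1 - α) * (2 - α) := by nlinarith
  rw [hmajorant, le_div_iff₀ hc] at hbound
  linarith

end Radial

section Strip

variable {u : ℝ → ℝ → ℝ}

lemma contDiffOn_slice_right (hu : ContDiffOn ℝ 1 (uncurry u) (univ ×ˢ Icc 0 1)) (θ : ℝ) :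
    ContDiffOn ℝ 1 (u θ) (Icc 0 1) :=
  hu.comp (contDiff_const.prodMk contDiff_id).contDiffOn fun _ hr ↦ ⟨trivial, hr⟩

lemma hasFDerivAt_uncurry (hu : ContDiffOn ℝ 1 (uncurry u) (univ ×ˢ Icc 0 1)) {θ r : ℝ}
    (hr : r ∈ Ioo 0 1) :
    HasFDerivAt (uncurry u) (fderivWithin ℝ (uncurry u) (univ ×ˢ Icc 0 1) (θ, r)) (θ, r) :=
  (hu.differentiableOn one_ne_zero _ ⟨trivial, Ioo_subset_Icc_self hr⟩).hasFDerivWithinAt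
    |>.hasFDerivAt (prod_mem_nhds univ_mem (Icc_mem_nhds hr.1 hr.2))

lemma deriv_slice_right_eq_fderivWithin (hu : ContDiffOn ℝ 1 (uncurry u) (univ ×ˢ Icc 0 1))
    {θ r : ℝ} (hr : r ∈ Ioo 0 1) :
    deriv (u θ) r = fderivWithin ℝ (uncurry u) (univ ×ˢ Icc 0 1) (θ, r) (0, 1) :=
  ((hasFDerivAt_uncurry hu hr).comp_hasDerivAt r
    ((hasDerivAt_const r θ).prodMk (hasDerivAt_id r))).deriv

lemma deriv_slice_left_eq_fderivWithin (hu : ContDiffOn ℝ 1 (uncurry u) (univ ×ˢ Icc 0 1))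
    {θ r : ℝ} (hr : r ∈ Ioo 0 1) :
    deriv (fun x ↦ u x r) θ = fderivWithin ℝ (uncurry u) (univ ×ˢ Icc 0 1) (θ, r) (1, 0) := by
  have h := (hasFDerivAt_uncurry (θ := θ) hu hr).comp_hasDerivAt θ
    ((hasDerivAt_id' θ).prodMk (hasDerivAt_const θ r))
  exact h.deriv

lemma continuousOn_fderivWithin_uncurry (hu : ContDiffOn ℝ 1 (uncurry u) (univ ×ˢ Icc 0 1))
    (a b : ℝ) :
    ContinuousOn (fderivWithin ℝ (uncurry u) (univ ×ˢ Icc 0 1)) (Icc a b ×ˢ Icc 0 1) :=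
  (hu.continuousOn_fderivWithin (uniqueDiffOn_univ.prod (uniqueDiffOn_Icc zero_lt_one))
    le_rfl).mono (Set.prod_mono (subset_univ _) subset_rfl)

lemma integrableOn_deriv_slice_left_sq (hu : ContDiffOn ℝ 1 (uncurry u) (univ ×ˢ Icc 0 1))
    (a b : ℝ) :
    IntegrableOn (fun z : ℝ × ℝ ↦ deriv (fun x ↦ u x z.2) z.1 ^ 2) (Ioo a b ×ˢ Ioo 0 1) :=
  integrableOn_of_eqOn_of_continuousOn (isCompact_Icc.prod isCompact_Icc)
    (((continuousOn_fderivWithin_uncurry hu a b).clm_apply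
      (continuousOn_const (c := ((1 : ℝ), (0 : ℝ))))).pow 2)
    (Set.prod_mono Ioo_subset_Icc_self Ioo_subset_Icc_self)
    (measurableSet_Ioo.prod measurableSet_Ioo) fun z hz ↦ by
      simp only [Pi.pow_apply, deriv_slice_left_eq_fderivWithin hu hz.2]

lemma integrableOn_rpow_mul_deriv_slice_right_sq
    (hu : ContDiffOn ℝ 1 (uncurry u) (univ ×ˢ Icc 0 1)) {α : ℝ} (hα : 0 ≤ α) (a b : ℝ) :
    IntegrableOn (fun z : ℝ × ℝ ↦ z.2 ^ α * deriv (u z.1) z.2 ^ 2) (Ioo a b ×ˢ Ioo 0 1) :=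
  integrableOn_of_eqOn_of_continuousOn (isCompact_Icc.prod isCompact_Icc)
    ((continuousOn_snd.rpow_const fun _ _ ↦ Or.inr hα).mul
      (((continuousOn_fderivWithin_uncurry hu a b).clm_apply
        (continuousOn_const (c := ((0 : ℝ), (1 : ℝ))))).pow 2))
    (Set.prod_mono Ioo_subset_Icc_self Ioo_subset_Icc_self)
    (measurableSet_Ioo.prod measurableSet_Ioo) fun z hz ↦ by
      simp only [Pi.mul_apply, Pi.pow_apply, deriv_slice_right_eq_fderivWithin hu hz.2]

lemma exists_mem_Ioo_prod_Ioo_ne_zero (hu : ContDiffOn ℝ 1 (uncurry u) (univ ×ˢ Icc 0 1))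
    {T : ℝ} (hT : 0 < T) (hper : ∀ θ r, u (θ + T) r = u θ r)
    (hne : ∃ θ, ∃ r ∈ Icc (0 : ℝ) 1, u θ r ≠ 0) :
    ∃ z ∈ Ioo 0 T ×ˢ Ioo 0 1, uncurry u z ≠ 0 := by
  obtain ⟨θ₀, r₀, hr₀, hu₀⟩ := hne
  obtain ⟨θ₁, hθ₁, hθ₀₁⟩ := Periodic.exists_mem_Ico₀ (f := fun θ ↦ u θ r₀)
    (fun θ ↦ hper θ r₀) hT θ₀
  have hcl : (θ₁, r₀) ∈ closure (Ioo 0 T ×ˢ Ioo 0 1) := by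
    rw [closure_prod_eq, closure_Ioo hT.ne, closure_Ioo zero_ne_one]
    exact ⟨Ico_subset_Icc_self hθ₁, hr₀⟩
  have hev : ∀ᶠ z in 𝓝[univ ×ˢ Icc 0 1] (θ₁, r₀), uncurry u z ≠ 0 :=
    (hu.continuousOn _ ⟨trivial, hr₀⟩).tendsto.eventually_ne
      (show u θ₁ r₀ ≠ 0 from hθ₀₁ ▸ hu₀)
  have := mem_closure_iff_nhdsWithin_neBot.1 hcl
  obtain ⟨z, hz, hz0⟩ := ((hev.filter_mono (nhdsWithin_mono _
    (Set.prod_mono (subset_univ (Ioo 0 T)) Ioo_subset_Icc_self))).and self_mem_nhdsWithin).exists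
  exact ⟨z, hz0, hz⟩

lemma integral_integral_sq_pos (hu : ContDiffOn ℝ 1 (uncurry u) (univ ×ˢ Icc 0 1)) {T : ℝ}
    (hT : 0 < T) (hper : ∀ θ r, u (θ + T) r = u θ r)
    (hne : ∃ θ, ∃ r ∈ Icc (0 : ℝ) 1, u θ r ≠ 0) :
    0 < ∫ θ in Ioo 0 T, ∫ r in Ioo (0 : ℝ) 1, u θ r ^ 2 := by
  obtain ⟨z, hz, hz0⟩ := exists_mem_Ioo_prod_Ioo_ne_zero hu hT hper hne
  have hsub : Ioo 0 T ×ˢ Ioo (0 : ℝ) 1 ⊆ Icc 0 T ×ˢ Icc 0 1 :=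
    Set.prod_mono Ioo_subset_Icc_self Ioo_subset_Icc_self
  have hcont : ContinuousOn (fun z : ℝ × ℝ ↦ uncurry u z ^ 2) (Icc 0 T ×ˢ Icc 0 1) :=
    (hu.continuousOn.mono (Set.prod_mono (subset_univ _) subset_rfl)).pow 2
  have hint : IntegrableOn (fun z : ℝ × ℝ ↦ uncurry u z ^ 2) (Ioo 0 T ×ˢ Ioo 0 1) :=
    (hcont.integrableOn_compact (isCompact_Icc.prod isCompact_Icc)).mono_set hsub
  exact (setIntegral_pos_of_continuousOn (isOpen_Ioo.prod isOpen_Ioo) (hcont.mono hsub) hint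
    (fun _ _ ↦ sq_nonneg _) hz (pow_ne_zero 2 hz0)).trans_eq (setIntegral_prod _ hint)

end Strip

/-- **Lower bound `(1−α)²/4` for the first eigenvalue** of the degenerate operator
`𝒜u = −∂_θθ u − ∂_r(r^α ∂_r u)` on `Ω = 𝕋 × (0,1)` with Dirichlet boundary conditions,
in variational form (Remark 2.1 / Notation 2.1 of the paper).
The torus `𝕋 = ℝ/2πℤ` is modelled by `2π`-periodic functions of `θ ∈ ℝ`, with the
integral over `𝕋` realized as the integral over `(0, 2π)`. -/
theorem stmt_3 (α : ℝ) (hα : α ∈ Set.Ioo (0 : ℝ) 1) :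
    ∀ u : ℝ → ℝ → ℝ,
      ContDiffOn ℝ 1 (fun p : ℝ × ℝ => u p.1 p.2) (Set.univ ×ˢ Set.Icc 0 1) →
      (∀ θ r : ℝ, u (θ + 2 * Real.pi) r = u θ r) →
      (∀ θ : ℝ, u θ 0 = 0) →
      (((1 - α) ^ 2 / 4) * ∫ θ in Set.Ioo 0 (2 * Real.pi), ∫ r in Set.Ioo (0 : ℝ) 1,
            (u θ r) ^ 2)
        ≤ (∫ θ in Set.Ioo 0 (2 * Real.pi), ∫ r in Set.Ioo (0 : ℝ) 1,
            r ^ α * (deriv (u θ) r) ^ 2)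
      ∧
      ((∃ θ : ℝ, ∃ r ∈ Set.Icc (0 : ℝ) 1, u θ r ≠ 0) →
        (1 - α) ^ 2 / 4 ≤
          (∫ θ in Set.Ioo 0 (2 * Real.pi), ∫ r in Set.Ioo (0 : ℝ) 1,
              ((deriv (fun x => u x r) θ) ^ 2 + r ^ α * (deriv (u θ) r) ^ 2)) /
          (∫ θ in Set.Ioo 0 (2 * Real.pi), ∫ r in Set.Ioo (0 : ℝ) 1, (u θ r) ^ 2)) := by
  obtain ⟨hα0, hα1⟩ := hα
  intro u hu hper hu0
  have hJ := integrableOn_rpow_mul_deriv_slice_right_sq hu hα0.le 0 (2 * π)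
  have hK := (integrableOn_deriv_slice_left_sq hu 0 (2 * π)).add hJ
  have hardy : (1 - α) ^ 2 / 4 * ∫ θ in Ioo 0 (2 * π), ∫ r in Ioo (0 : ℝ) 1, u θ r ^ 2
      ≤ ∫ θ in Ioo 0 (2 * π), ∫ r in Ioo (0 : ℝ) 1, r ^ α * deriv (u θ) r ^ 2 := by
    rw [← integral_const_mul]
    refine integral_mono_of_nonneg (ae_of_all _ fun θ ↦ by positivity)
      (integrableOn_setIntegral_prod_left hJ) (ae_of_all _ fun θ ↦ ?_)
    calc (1 - α) ^ 2 / 4 * ∫ r in Ioo (0 : ℝ) 1, u θ r ^ 2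
        ≤ (1 - α) * (2 - α) * ∫ r in Ioo (0 : ℝ) 1, u θ r ^ 2 := by
          gcongr
          nlinarith
      _ ≤ _ := mul_integral_sq_le_integral_rpow_mul_deriv_sq hα0.le hα1
          (contDiffOn_slice_right hu θ) (hu0 θ)
  refine ⟨hardy, fun hne ↦ ?_⟩
  have hpos : 0 < ∫ θ in Ioo 0 (2 * π), ∫ r in Ioo (0 : ℝ) 1, u θ r ^ 2 :=
    integral_integral_sq_pos hu two_pi_pos hper hne
  have hJK : ∫ θ in Ioo 0 (2 * π), ∫ r in Ioo (0 : ℝ) 1, r ^ α * deriv (u θ) r ^ 2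
      ≤ ∫ θ in Ioo 0 (2 * π), ∫ r in Ioo (0 : ℝ) 1,
          (deriv (fun x ↦ u x r) θ ^ 2 + r ^ α * deriv (u θ) r ^ 2) :=
    (setIntegral_prod _ hJ).symm.trans_le
      ((setIntegral_mono hJ hK fun z ↦ le_add_of_nonneg_left (sq_nonneg _)).trans_eq
        (setIntegral_prod _ hK))
  rw [le_div_iff₀ hpos]
  exact hardy.trans hJK
end

section
/- Let α ∈ (0,1) and δ ∈ (0,1). For every continuously differentiable function u : 𝕋 × [0,1] → ℝ with u(θ,0) = 0 for all θ ∈ 𝕋, one has ∫_𝕋 ∫_0^δ u(θ,r)² dr dθ ≤ (4/(1−α)²) δ^{2−α} ∫_𝕋 ∫_0^1 r^{α} (∂_r u(θ,r))² dr dθ. -/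
/-!
Since `u(θ, 0) = 0`, `u(θ, r) = ∫₀ʳ ∂ᵣu(θ, s) ds`. Writing `∂ᵣu = s^(-α/2) · s^(α/2) ∂ᵣu`
and applying Cauchy–Schwarz, with `s^(-α)` integrable at `0` because `α < 1`, gives
`u(θ, r)² ≤ r^(1-α)/(1-α) · ∫₀¹ s^α (∂ᵣu)² ds`. Integrating over `r ∈ (0, δ)` yields the factor
`δ^(2-α)/((1-α)(2-α)) ≤ 4δ^(2-α)/(1-α)²`, and then one integrates over `θ`.
-/

open MeasureTheory Set Topology

theorem sq_integral_mul_le_integral_sq_mul_integral_sq {X : Type*} [MeasurableSpace X]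
    {μ : Measure X} {f g : X → ℝ} (hf : MemLp f 2 μ) (hg : MemLp g 2 μ) :
    (∫ x, f x * g x ∂μ) ^ 2 ≤ (∫ x, f x ^ 2 ∂μ) * ∫ x, g x ^ 2 ∂μ := by
  have hHolder := integral_mul_norm_le_Lp_mul_Lq .two_two (by simpa using hf) (by simpa using hg)
  simp only [Real.norm_eq_abs, Real.rpow_two, sq_abs] at hHolder
  have hsqrt : ∀ {y : ℝ}, 0 ≤ y → (y ^ (1 / 2 : ℝ)) ^ 2 = y := fun hy => by
    rw [← Real.sqrt_eq_rpow, Real.sq_sqrt hy]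
  calc (∫ x, f x * g x ∂μ) ^ 2 ≤ (∫ x, |f x| * |g x| ∂μ) ^ 2 := by
        rw [← sq_abs]
        gcongr
        simpa only [abs_mul] using abs_integral_le_integral_abs (f := fun x => f x * g x)
    _ ≤ ((∫ x, f x ^ 2 ∂μ) ^ (1 / 2 : ℝ) * (∫ x, g x ^ 2 ∂μ) ^ (1 / 2 : ℝ)) ^ 2 := by
        gcongr
    _ = (∫ x, f x ^ 2 ∂μ) * ∫ x, g x ^ 2 ∂μ := by
        rw [mul_pow, hsqrt (integral_nonneg fun _ => sq_nonneg _),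
          hsqrt (integral_nonneg fun _ => sq_nonneg _)]

theorem integral_Ioc_rpow {a r : ℝ} (ha : -1 < a) (hr : 0 ≤ r) :
    ∫ s in Ioc 0 r, s ^ a = r ^ (a + 1) / (a + 1) := by
  rw [← intervalIntegral.integral_of_le hr, integral_rpow (.inl ha),
    Real.zero_rpow (by linarith), sub_zero]

theorem rpow_div_two_sq {s : ℝ} (hs : 0 ≤ s) (a : ℝ) : (s ^ (a / 2)) ^ 2 = s ^ a := by
  rw [← Real.rpow_natCast, ← Real.rpow_mul hs]
  norm_num

theorem sq_le_mul_integral_rpow_mul_deriv_sq {f f' : ℝ → ℝ} {α r : ℝ} (hα : 0 ≤ α) (hα1 : α < 1)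
    (hr : 0 ≤ r) (hf : ContinuousOn f (Icc 0 r)) (hf0 : f 0 = 0)
    (hderiv : ∀ s ∈ Ioo 0 r, HasDerivAt f (f' s) s) (hf' : ContinuousOn f' (Icc 0 r)) :
    f r ^ 2 ≤ r ^ (1 - α) / (1 - α) * ∫ s in Ioc 0 r, s ^ α * f' s ^ 2 := by
  set μ := volume.restrict (Ioc (0 : ℝ) r)
  have hf'μ : AEStronglyMeasurable f' μ :=
    (hf'.aestronglyMeasurable measurableSet_Icc).mono_measure
      (Measure.restrict_mono Ioc_subset_Icc_self le_rfl)
  have hFTC : f r = ∫ s, s ^ (-α / 2) * (s ^ (α / 2) * f' s) ∂μ := by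
    rw [← sub_zero (f r), ← hf0, ← intervalIntegral.integral_eq_sub_of_hasDerivAt_of_le hr hf
      hderiv (hf'.intervalIntegrable_of_Icc hr), intervalIntegral.integral_of_le hr]
    refine setIntegral_congr_fun measurableSet_Ioc fun s hs => ?_
    rw [← mul_assoc, ← Real.rpow_add hs.1, neg_div, neg_add_cancel, Real.rpow_zero, one_mul]
  have hweight : ∫ s, (s ^ (-α / 2)) ^ 2 ∂μ = r ^ (1 - α) / (1 - α) := by
    rw [← neg_add_eq_sub, ← integral_Ioc_rpow (by linarith) hr]
    exact setIntegral_congr_fun measurableSet_Ioc fun s hs => by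
      rw [rpow_div_two_sq hs.1.le]
  have hweighted : ∫ s, (s ^ (α / 2) * f' s) ^ 2 ∂μ = ∫ s in Ioc 0 r, s ^ α * f' s ^ 2 :=
    setIntegral_congr_fun measurableSet_Ioc fun s hs => by rw [mul_pow, rpow_div_two_sq hs.1.le]
  have hrpow : ∀ a : ℝ, AEStronglyMeasurable (fun s : ℝ => s ^ a) μ := fun a =>
    (measurable_id.pow_const a).aestronglyMeasurable
  have hmemLp_weight : MemLp (fun s : ℝ => s ^ (-α / 2)) 2 μ := by
    refine (memLp_two_iff_integrable_sq (hrpow _)).2 ?_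
    have hint : IntegrableOn (fun s : ℝ => s ^ (-α)) (Ioc 0 r) :=
      (intervalIntegrable_iff_integrableOn_Ioc_of_le hr).1
        (intervalIntegral.intervalIntegrable_rpow' (by linarith))
    refine hint.congr_fun (fun s hs => ?_) measurableSet_Ioc
    rw [rpow_div_two_sq hs.1.le]
  have hmemLp_weighted : MemLp (fun s => s ^ (α / 2) * f' s) 2 μ := by
    refine (memLp_two_iff_integrable_sq ((hrpow _).mul hf'μ)).2 ?_
    have hint : IntegrableOn (fun s : ℝ => s ^ α * f' s ^ 2) (Icc 0 r) :=
      (((Real.continuous_rpow_const hα).continuousOn).mul (hf'.pow 2)).integrableOn_Icc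
    refine (hint.mono_set Ioc_subset_Icc_self).congr_fun (fun s hs => ?_) measurableSet_Ioc
    simp only [Pi.mul_apply, mul_pow, rpow_div_two_sq hs.1.le]
  rw [hFTC, ← hweight, ← hweighted]
  exact sq_integral_mul_le_integral_sq_mul_integral_sq hmemLp_weight hmemLp_weighted

theorem integral_sq_le_mul_integral_rpow_mul_deriv_sq {f f' : ℝ → ℝ} {α b δ : ℝ} (hα : 0 ≤ α)
    (hα1 : α < 1) (hδ : 0 ≤ δ) (hδb : δ ≤ b) (hf : ContinuousOn f (Icc 0 b)) (hf0 : f 0 = 0)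
    (hderiv : ∀ s ∈ Ioo 0 b, HasDerivAt f (f' s) s) (hf' : ContinuousOn f' (Icc 0 b)) :
    ∫ r in Ioo 0 δ, f r ^ 2 ≤
      δ ^ (2 - α) / ((1 - α) * (2 - α)) * ∫ s in Ioo 0 b, s ^ α * f' s ^ 2 := by
  set W := ∫ s in Ioo 0 b, s ^ α * f' s ^ 2
  have hpointwise : ∀ r ∈ Ioo 0 δ, f r ^ 2 ≤ r ^ (1 - α) / (1 - α) * W := by
    intro r hr
    have hrb : r < b := hr.2.trans_le hδb
    have hIcc : Icc 0 r ⊆ Icc 0 b := Icc_subset_Icc_right hrb.le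
    refine (sq_le_mul_integral_rpow_mul_deriv_sq hα hα1 hr.1.le (hf.mono hIcc) hf0
      (fun s hs => hderiv s ⟨hs.1, hs.2.trans hrb⟩) (hf'.mono hIcc)).trans ?_
    gcongr
    · exact div_nonneg (Real.rpow_nonneg hr.1.le _) (by linarith)
    · refine setIntegral_mono_set ?_ ?_ (Ioc_subset_Ioo_right hrb).eventuallyLE
      · exact ((Real.continuous_rpow_const hα).continuousOn.mul
          (hf'.pow 2)).integrableOn_Icc.mono_set Ioo_subset_Icc_self
      · exact (ae_restrict_iff' measurableSet_Ioo).2 (ae_of_all _ fun s hs =>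
          mul_nonneg (Real.rpow_nonneg hs.1.le _) (sq_nonneg _))
  calc ∫ r in Ioo 0 δ, f r ^ 2 ≤ ∫ r in Ioo 0 δ, r ^ (1 - α) / (1 - α) * W := by
        refine setIntegral_mono_on ?_ ?_ measurableSet_Ioo hpointwise
        · exact ((hf.pow 2).integrableOn_Icc).mono_set
            (Ioo_subset_Icc_self.trans (Icc_subset_Icc_right hδb))
        · exact (((Real.continuous_rpow_const (by linarith)).div_const _).mul
            continuous_const).integrableOn_Icc.mono_set Ioo_subset_Icc_self
    _ = W / (1 - α) * ∫ r in Ioc 0 δ, r ^ (1 - α) := by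
        rw [← integral_Ioc_eq_integral_Ioo, ← integral_const_mul]
        exact setIntegral_congr_fun measurableSet_Ioc fun r _ => by ring
    _ = δ ^ (2 - α) / ((1 - α) * (2 - α)) * W := by
        rw [integral_Ioc_rpow (by linarith) hδ, show 1 - α + 1 = 2 - α by ring]
        field_simp

theorem ContDiffOn.exists_continuous_hasDerivAt_snd {E : Type*} [NormedAddCommGroup E]
    [NormedSpace ℝ E] {F : E × ℝ → ℝ} {a b : ℝ} (hab : a < b)
    (hF : ContDiffOn ℝ 1 F (univ ×ˢ Icc a b)) :
    ∃ G : E × ℝ → ℝ, Continuous G ∧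
      ∀ x, ∀ r ∈ Ioo a b, HasDerivAt (fun r => F (x, r)) (G (x, r)) r := by
  set S : Set (E × ℝ) := univ ×ˢ Icc a b
  have hS : UniqueDiffOn ℝ S := uniqueDiffOn_univ.prod (uniqueDiffOn_Icc hab)
  -- clamping the second coordinate into `[a, b]` extends `∂F/∂r` continuously to all of `E × ℝ`
  set clamp : E × ℝ → E × ℝ := fun p => (p.1, projIcc a b hab.le p.2)
  refine ⟨fun p => fderivWithin ℝ F S (clamp p) (0, 1), ?_, fun x r hr => ?_⟩
  · have hclamp : Continuous clamp := by fun_prop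
    refine ((hF.continuousOn_fderivWithin hS le_rfl).comp_continuous hclamp fun p => ?_).clm_apply
      continuous_const
    exact ⟨mem_univ _, Subtype.mem _⟩
  · have hmem : S ∈ 𝓝 (x, r) := prod_mem_nhds Filter.univ_mem (Icc_mem_nhds hr.1 hr.2)
    have hFx : DifferentiableAt ℝ F (x, r) := (hF.contDiffAt hmem).differentiableAt one_ne_zero
    have hline : HasDerivAt (fun r : ℝ => (x, r)) ((0 : E), (1 : ℝ)) r :=
      (hasDerivAt_const r x).prodMk (hasDerivAt_id r)
    simp only [clamp, projIcc_of_mem hab.le (Ioo_subset_Icc_self hr), fderivWithin_of_mem_nhds hmem]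
    exact hFx.hasFDerivAt.comp_hasDerivAt r hline

theorem continuous_integral_rpow_mul_sq {X : Type*} [TopologicalSpace X] [FirstCountableTopology X]
    [LocallyCompactSpace X] {G : X × ℝ → ℝ} (hG : Continuous G) {α : ℝ} (hα : 0 ≤ α) (a b : ℝ) :
    Continuous fun x => ∫ r in Ioo a b, r ^ α * G (x, r) ^ 2 := by
  simp_rw [← integral_Icc_eq_integral_Ioo]
  have hcont : Continuous fun p : X × ℝ => p.2 ^ α * G p ^ 2 :=
    (Real.continuous_rpow_const hα).comp continuous_snd |>.mul (hG.pow 2)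
  exact continuous_parametric_integral_of_continuous hcont isCompact_Icc

theorem div_one_sub_mul_two_sub_le {α c : ℝ} (hα : α < 1) (hc : 0 ≤ c) :
    c / ((1 - α) * (2 - α)) ≤ 4 / (1 - α) ^ 2 * c := by
  have h1α : 0 < 1 - α := sub_pos.2 hα
  calc c / ((1 - α) * (2 - α)) ≤ c / ((1 - α) ^ 2 / 4) := by
        gcongr
        nlinarith
    _ = 4 / (1 - α) ^ 2 * c := by field_simp

/-- **Boundary-layer smallness estimate near the degenerate boundary `r = 0`**
(used in the proof of the compact embedding, Lemma 2.2 of the paper).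
The torus `𝕋 = ℝ/2πℤ` is modelled by `2π`-periodic functions of `θ ∈ ℝ`, with the
integral over `𝕋` realized as the integral over `(0, 2π)`. -/
theorem stmt_4 (α δ : ℝ) (hα : α ∈ Set.Ioo (0 : ℝ) 1) (hδ : δ ∈ Set.Ioo (0 : ℝ) 1) :
    ∀ u : ℝ → ℝ → ℝ,
      ContDiffOn ℝ 1 (fun p : ℝ × ℝ => u p.1 p.2) (Set.univ ×ˢ Set.Icc 0 1) →
      (∀ θ r : ℝ, u (θ + 2 * Real.pi) r = u θ r) →
      (∀ θ : ℝ, u θ 0 = 0) →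
      (∫ θ in Set.Ioo 0 (2 * Real.pi), ∫ r in Set.Ioo (0 : ℝ) δ, (u θ r) ^ 2)
        ≤ (4 / (1 - α) ^ 2) * δ ^ (2 - α) *
          ∫ θ in Set.Ioo 0 (2 * Real.pi), ∫ r in Set.Ioo (0 : ℝ) 1,
            r ^ α * (deriv (u θ) r) ^ 2 := by
  intro u hu _ hu0
  obtain ⟨G, hGc, hG⟩ := hu.exists_continuous_hasDerivAt_snd zero_lt_one
  set W : ℝ → ℝ := fun θ => ∫ r in Ioo 0 1, r ^ α * G (θ, r) ^ 2
  have hW : ∀ θ, ∫ r in Ioo 0 1, r ^ α * deriv (u θ) r ^ 2 = W θ := fun θ =>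
    setIntegral_congr_fun measurableSet_Ioo fun r hr => by rw [(hG θ r hr).deriv]
  have hradial : ∀ θ, ∫ r in Ioo 0 δ, u θ r ^ 2 ≤ 4 / (1 - α) ^ 2 * δ ^ (2 - α) * W θ := by
    intro θ
    have hcont : ContinuousOn (u θ) (Icc 0 1) :=
      hu.continuousOn.comp (f := fun r => (θ, r)) (by fun_prop) fun r hr => ⟨mem_univ θ, hr⟩
    refine (integral_sq_le_mul_integral_rpow_mul_deriv_sq hα.1.le hα.2 hδ.1.le hδ.2.le hcont
      (hu0 θ) (hG θ) (hGc.comp (by fun_prop)).continuousOn).trans ?_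
    gcongr
    · exact setIntegral_nonneg measurableSet_Ioo fun r hr =>
        mul_nonneg (Real.rpow_nonneg hr.1.le _) (sq_nonneg _)
    · exact div_one_sub_mul_two_sub_le hα.2 (Real.rpow_nonneg hδ.1.le _)
  have hW_int : IntegrableOn W (Ioo 0 (2 * Real.pi)) :=
    (continuous_integral_rpow_mul_sq hGc hα.1.le 0 1).integrableOn_Icc.mono_set Ioo_subset_Icc_self
  simp_rw [hW, ← integral_const_mul]
  exact integral_mono_of_nonneg (ae_of_all _ fun θ => setIntegral_nonneg measurableSet_Ioo
    fun r _ => sq_nonneg _) (hW_int.const_mul _) (ae_of_all _ hradial)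
end

section
/- Let α ∈ (0,1) and let (u_n)_{n∈ℕ} be a sequence of continuously differentiable functions u_n : [0,1] → ℝ with u_n(0) = u_n(1) = 0, such that sup_n ∫_0^1 r^α (u_n′(r))² dr < +∞. Then there exists a subsequence of (u_n) that is Cauchy (hence convergent) in L²(0,1). -/
/-!
For `0 ≤ x ≤ y ≤ 1` the fundamental theorem of calculus and the weighted Cauchy–Schwarz
inequality `(∫ |u'|)² ≤ (∫ r^α u'²) (∫ r^(-α))` give
`|u y - u x|² ≤ E(u) (y^(1-α) - x^(1-α)) / (1-α) ≤ E(u) (y - x)^(1-α) / (1-α)`,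
so a sequence of bounded weighted energy `E` is uniformly Hölder of exponent `(1-α)/2` on
`[0,1]`, and uniformly bounded since `u 0 = 0`. Arzelà–Ascoli gives a uniformly Cauchy
subsequence, which is a fortiori Cauchy in `L²(0,1)`.
-/

open MeasureTheory Set Filter NNReal BoundedContinuousFunction

theorem Real.rpow_sub_rpow_le_sub_rpow {p x y : ℝ} (hp0 : 0 ≤ p) (hp1 : p ≤ 1) (hx : 0 ≤ x)
    (hxy : x ≤ y) : y ^ p - x ^ p ≤ (y - x) ^ p := by
  have := Real.rpow_add_le_add_rpow hx (sub_nonneg.2 hxy) hp0 hp1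
  rw [add_sub_cancel] at this
  linarith

theorem two_mul_abs_le_mul_add_div {t w d : ℝ} (ht : 0 < t) (hw : 0 < w) :
    2 * |d| ≤ t * (w * d ^ 2) + w⁻¹ / t := by
  have hsq : 2 * (t * w) * |d| ≤ (t * w) ^ 2 * d ^ 2 + 1 := by
    nlinarith [sq_nonneg (t * w * |d| - 1), sq_abs d]
  have htw : 0 < t * w := by positivity
  calc 2 * |d| = 2 * (t * w) * |d| / (t * w) := by field_simp
    _ ≤ ((t * w) ^ 2 * d ^ 2 + 1) / (t * w) := by gcongr
    _ = t * (w * d ^ 2) + w⁻¹ / t := by field_simp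

theorem sq_le_mul_of_forall_two_mul_le {a b c : ℝ} (ha : 0 ≤ a) (hb : 0 ≤ b) (hc : 0 ≤ c)
    (h : ∀ t > 0, 2 * a ≤ t * b + c / t) : a ^ 2 ≤ b * c := by
  rcases ha.eq_or_lt with rfl | ha
  · simpa using mul_nonneg hb hc
  rcases hb.eq_or_lt with rfl | hb
  · have h' := h ((c + a) / a) (by positivity)
    rw [mul_zero, zero_add, div_div_eq_mul_div, le_div_iff₀ (by positivity)] at h'
    nlinarith
  · have h' := h (a / b) (by positivity)
    rw [div_mul_cancel₀ a hb.ne', div_div_eq_mul_div] at h'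
    have : a * a ≤ c * b := (le_div_iff₀ ha).1 (by linarith)
    nlinarith

/-- Cauchy–Schwarz, from the pointwise AM–GM bound with a free parameter `t` optimised after
integration. -/
theorem sq_integral_abs_le_mul_integral_inv {X : Type*} [MeasurableSpace X] {μ : Measure X}
    {g w : X → ℝ} (hw : ∀ᵐ x ∂μ, 0 < w x) (hwg : Integrable (fun x ↦ w x * g x ^ 2) μ)
    (hw_inv : Integrable (fun x ↦ (w x)⁻¹) μ) :
    (∫ x, |g x| ∂μ) ^ 2 ≤ (∫ x, w x * g x ^ 2 ∂μ) * ∫ x, (w x)⁻¹ ∂μ := by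
  refine sq_le_mul_of_forall_two_mul_le (integral_nonneg fun x ↦ abs_nonneg _)
    (integral_nonneg_of_ae (hw.mono fun x hx ↦ by positivity))
    (integral_nonneg_of_ae (hw.mono fun x hx ↦ by positivity)) fun t ht ↦ ?_
  calc 2 * ∫ x, |g x| ∂μ = ∫ x, 2 * |g x| ∂μ := (integral_const_mul _ _).symm
    _ ≤ ∫ x, t * (w x * g x ^ 2) + (w x)⁻¹ / t ∂μ :=
        integral_mono_of_nonneg (ae_of_all _ fun x ↦ by positivity)
          ((hwg.const_mul t).add (hw_inv.div_const t))
          (hw.mono fun x hx ↦ two_mul_abs_le_mul_add_div ht hx)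
    _ = t * (∫ x, w x * g x ^ 2 ∂μ) + (∫ x, (w x)⁻¹ ∂μ) / t := by
        rw [integral_add (hwg.const_mul t) (hw_inv.div_const t), integral_const_mul,
          integral_div]

theorem HolderWith.uniformEquicontinuous {ι X Y : Type*} [PseudoEMetricSpace X]
    [PseudoEMetricSpace Y] {f : ι → X → Y} {C r : ℝ≥0} (hr : 0 < r)
    (hf : ∀ i, HolderWith C r (f i)) : UniformEquicontinuous f := by
  rw [uniformEquicontinuous_iff_uniformContinuous]
  have : HolderWith C r (UniformFun.ofFun ∘ Function.swap f) := fun x y ↦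
    UniformFun.edist_le.2 fun i ↦ hf i x y
  exact this.uniformContinuous hr

theorem HolderOnWith.of_dist_le {X Y : Type*} [PseudoMetricSpace X] [PseudoMetricSpace Y]
    {C r : ℝ≥0} {f : X → Y} {s : Set X}
    (h : ∀ x ∈ s, ∀ y ∈ s, dist (f x) (f y) ≤ C * dist x y ^ (r : ℝ)) :
    HolderOnWith C r f s := by
  intro x hx y hy
  rw [edist_nndist, edist_nndist, ← ENNReal.coe_rpow_of_nonneg _ r.coe_nonneg,
    ← ENNReal.coe_mul, ENNReal.coe_le_coe, ← NNReal.coe_le_coe]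
  simpa using h x hx y hy

theorem ContDiffOn.exists_continuousOn_eqOn_deriv {f : ℝ → ℝ} {a b : ℝ} (hab : a < b)
    (hf : ContDiffOn ℝ 1 f (Icc a b)) :
    ∃ v, ContinuousOn v (Icc a b) ∧ EqOn v (deriv f) (Ioo a b) :=
  ⟨derivWithin f (Icc a b), hf.continuousOn_derivWithin (uniqueDiffOn_Icc hab) le_rfl,
    fun _ hr ↦ derivWithin_of_mem_nhds (Icc_mem_nhds hr.1 hr.2)⟩

theorem integrableOn_inv_rpow_Ioo {α x y : ℝ} (hα : α < 1) (hx : 0 ≤ x) (hxy : x ≤ y) :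
    IntegrableOn (fun r ↦ (r ^ α)⁻¹) (Ioo x y) :=
  ((intervalIntegrable_iff_integrableOn_Ioo_of_le hxy).1
    (intervalIntegral.intervalIntegrable_rpow' (by linarith))).congr_fun
      (fun r hr ↦ Real.rpow_neg (hx.trans hr.1.le) α) measurableSet_Ioo

theorem integral_inv_rpow_Ioo {α x y : ℝ} (hα : α < 1) (hx : 0 ≤ x) (hxy : x ≤ y) :
    ∫ r in Ioo x y, (r ^ α)⁻¹ = (y ^ (1 - α) - x ^ (1 - α)) / (1 - α) := by
  rw [← setIntegral_congr_fun measurableSet_Ioo fun r hr ↦ Real.rpow_neg (hx.trans hr.1.le) α,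
    ← integral_Ioc_eq_integral_Ioo, ← intervalIntegral.integral_of_le hxy,
    integral_rpow (Or.inl (by linarith)), neg_add_eq_sub]

/-- The squared seminorm of `H¹₀((0,1); r^α)`. -/
noncomputable def weightedEnergy (α : ℝ) (f : ℝ → ℝ) : ℝ :=
  ∫ r in Ioo 0 1, r ^ α * deriv f r ^ 2

theorem weightedEnergy_nonneg (α : ℝ) (f : ℝ → ℝ) : 0 ≤ weightedEnergy α f :=
  setIntegral_nonneg measurableSet_Ioo fun r hr ↦ by have := hr.1; positivity

theorem sq_sub_le_weightedEnergy_mul {α : ℝ} (hα0 : 0 ≤ α) (hα1 : α < 1) {f : ℝ → ℝ}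
    (hf : ContDiffOn ℝ 1 f (Icc 0 1)) {x y : ℝ} (hx : 0 ≤ x) (hxy : x ≤ y) (hy : y ≤ 1) :
    (f y - f x) ^ 2 ≤ weightedEnergy α f * ((y ^ (1 - α) - x ^ (1 - α)) / (1 - α)) := by
  obtain ⟨v, hv, hv_eq⟩ := hf.exists_continuousOn_eqOn_deriv zero_lt_one
  have hsub : Ioo x y ⊆ Ioo 0 1 := Ioo_subset_Ioo hx hy
  have hweight : ContinuousOn (fun r : ℝ ↦ r ^ α) (Icc 0 1) := fun r _ ↦
    (Real.continuousAt_rpow_const r α (Or.inr hα0)).continuousWithinAt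
  have henergy_int : IntegrableOn (fun r ↦ r ^ α * deriv f r ^ 2) (Ioo 0 1) :=
    ((hweight.mul (hv.pow 2)).integrableOn_Icc.mono_set Ioo_subset_Icc_self).congr_fun
      (fun r hr ↦ congrArg (r ^ α * · ^ 2) (hv_eq hr)) measurableSet_Ioo
  have hderiv_int : IntervalIntegrable (deriv f) volume x y :=
    (intervalIntegrable_iff_integrableOn_Ioo_of_le hxy).2
      (((hv.integrableOn_Icc.mono_set Ioo_subset_Icc_self).congr_fun hv_eq
        measurableSet_Ioo).mono_set hsub)
  have hftc : f y - f x = ∫ r in Ioo x y, deriv f r := by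
    rw [← intervalIntegral.integral_eq_sub_of_hasDerivAt_of_le hxy
      (hf.continuousOn.mono (Icc_subset_Icc hx hy))
      (fun r hr ↦ ((hf.differentiableOn one_ne_zero).differentiableAt
        (Icc_mem_nhds (hsub hr).1 (hsub hr).2)).hasDerivAt) hderiv_int,
      intervalIntegral.integral_of_le hxy, integral_Ioc_eq_integral_Ioo]
  calc (f y - f x) ^ 2 ≤ (∫ r in Ioo x y, |deriv f r|) ^ 2 := by
        rw [hftc, ← sq_abs]
        exact pow_le_pow_left₀ (abs_nonneg _) (abs_integral_le_integral_abs) 2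
    _ ≤ (∫ r in Ioo x y, r ^ α * deriv f r ^ 2) * ∫ r in Ioo x y, (r ^ α)⁻¹ :=
        sq_integral_abs_le_mul_integral_inv
          ((ae_restrict_mem measurableSet_Ioo).mono fun r hr ↦
            Real.rpow_pos_of_pos (hx.trans_lt hr.1) α)
          (henergy_int.mono_set hsub) (integrableOn_inv_rpow_Ioo hα1 hx hxy)
    _ ≤ _ := by
        rw [integral_inv_rpow_Ioo hα1 hx hxy]
        refine mul_le_mul_of_nonneg_right (setIntegral_mono_set henergy_int
          ((ae_restrict_mem measurableSet_Ioo).mono fun r hr ↦ ?_) hsub.eventuallyLE)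
          (div_nonneg (sub_nonneg.2 (by gcongr)) (by linarith))
        have := hr.1
        positivity

theorem holderOnWith_of_weightedEnergy_le {α : ℝ} (hα0 : 0 ≤ α) (hα1 : α < 1) {f : ℝ → ℝ}
    (hf : ContDiffOn ℝ 1 f (Icc 0 1)) {B : ℝ≥0} (hB : weightedEnergy α f ≤ B) :
    HolderOnWith (NNReal.sqrt (B / (1 - α).toNNReal)) ((1 - α).toNNReal / 2) f
      (Icc 0 1) := by
  have hβ : 0 < 1 - α := by linarith
  refine HolderOnWith.of_dist_le fun x hx y hy ↦ ?_
  wlog hxy : x ≤ y generalizing x y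
  · rw [dist_comm, dist_comm x]
    exact this y hy x hx (le_of_not_ge hxy)
  have hsq : (f y - f x) ^ 2 ≤ B / (1 - α) * (y - x) ^ (1 - α) :=
    calc (f y - f x) ^ 2
        ≤ weightedEnergy α f * ((y ^ (1 - α) - x ^ (1 - α)) / (1 - α)) :=
          sq_sub_le_weightedEnergy_mul hα0 hα1 hf hx.1 hxy hy.2
      _ ≤ B * ((y - x) ^ (1 - α) / (1 - α)) := by
          refine mul_le_mul hB (div_le_div_of_nonneg_right
            (Real.rpow_sub_rpow_le_sub_rpow hβ.le (by linarith) hx.1 hxy) hβ.le)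
            (div_nonneg (sub_nonneg.2 (by gcongr; exact hx.1)) hβ.le) B.2
      _ = B / (1 - α) * (y - x) ^ (1 - α) := by ring
  rw [dist_comm, Real.dist_eq, dist_comm, Real.dist_eq, abs_of_nonneg (sub_nonneg.2 hxy),
    Real.coe_sqrt, NNReal.coe_div, NNReal.coe_div, Real.coe_toNNReal _ hβ.le,
    NNReal.coe_ofNat, ← Real.sqrt_sq_eq_abs]
  calc √((f y - f x) ^ 2) ≤ √(B / (1 - α) * (y - x) ^ (1 - α)) := Real.sqrt_le_sqrt hsq
    _ = √(B / (1 - α)) * (y - x) ^ ((1 - α) / 2) := by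
        rw [Real.sqrt_mul (by positivity), Real.sqrt_eq_rpow ((y - x) ^ _),
          ← Real.rpow_mul (by linarith), mul_one_div]

theorem exists_strictMono_uniformCauchySeqOn {X : Type*} [TopologicalSpace X] {K : Set X}
    (hK : IsCompact K) {F : ℕ → X → ℝ} {M : ℝ} (hbdd : ∀ n, ∀ x ∈ K, |F n x| ≤ M)
    (hequi : Equicontinuous fun n ↦ K.domRestrict (F n)) :
    ∃ ψ : ℕ → ℕ, StrictMono ψ ∧ UniformCauchySeqOn (fun n ↦ F (ψ n)) atTop K := by
  have : CompactSpace K := isCompact_iff_compactSpace.1 hK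
  let G : ℕ → K →ᵇ ℝ := fun n ↦ .mkOfCompact ⟨K.domRestrict (F n), hequi.continuous n⟩
  have hequi_range : Equicontinuous ((↑) : range G → K → ℝ) := by
    convert hequi.comp (rangeSplitting G) with g
    rw [← apply_rangeSplitting G g]
    rfl
  have hcomp : IsCompact (closure (range G)) :=
    BoundedContinuousFunction.arzela_ascoli (Icc (-M) M) isCompact_Icc (range G)
      (by rintro _ x ⟨n, rfl⟩; exact abs_le.1 (hbdd n x x.2)) hequi_range
  obtain ⟨_, -, ψ, hψ, hlim⟩ :=
    hcomp.tendsto_subseq fun n ↦ subset_closure (mem_range_self n)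
  refine ⟨ψ, hψ, Metric.uniformCauchySeqOn_iff.2 fun ε hε ↦ ?_⟩
  obtain ⟨N, hN⟩ := Metric.cauchySeq_iff.1 hlim.cauchySeq ε hε
  exact ⟨N, fun m hm k hk x hx ↦
    (BoundedContinuousFunction.dist_coe_le_dist ⟨x, hx⟩).trans_lt (hN m hm k hk)⟩

theorem sqrt_integral_Ioo_sq_le {g : ℝ → ℝ} {c : ℝ} (hg : ∀ t ∈ Ioo (0 : ℝ) 1, |g t| ≤ c) :
    √(∫ t in Ioo 0 1, g t ^ 2) ≤ c := by
  have hc : 0 ≤ c := (abs_nonneg _).trans (hg 2⁻¹ ⟨by norm_num, by norm_num⟩)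
  have hint : ∫ t in Ioo 0 1, g t ^ 2 ≤ c ^ 2 := by
    refine (le_abs_self _).trans ?_
    have h := norm_setIntegral_le_of_norm_le_const (f := fun t ↦ g t ^ 2) (C := c ^ 2)
      (measure_Ioo_lt_top (μ := volume)) fun t ht ↦ by
        simpa using pow_le_pow_left₀ (abs_nonneg _) (hg t ht) 2
    norm_num at h
    exact h
  exact (Real.sqrt_le_sqrt hint).trans_eq (Real.sqrt_sq hc)

theorem stmt_6_general (α : ℝ) (hα : α ∈ Set.Ioo (0 : ℝ) 1) (u : ℕ → ℝ → ℝ)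
    (hC1 : ∀ n, ContDiffOn ℝ 1 (u n) (Set.Icc 0 1))
    (hbd0 : ∀ n, u n 0 = 0)
    (hbound : ∃ B : ℝ, ∀ n,
      (∫ r in Set.Ioo (0 : ℝ) 1, r ^ α * (deriv (u n) r) ^ 2) ≤ B) :
    ∃ ψ : ℕ → ℕ, StrictMono ψ ∧
      ∀ ε : ℝ, 0 < ε → ∃ N : ℕ, ∀ m ≥ N, ∀ k ≥ N,
        Real.sqrt (∫ r in Set.Ioo (0 : ℝ) 1, (u (ψ m) r - u (ψ k) r) ^ 2) < ε := by
  obtain ⟨hα0, hα1⟩ := hα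
  obtain ⟨B, hB⟩ := hbound
  lift B to ℝ≥0 using (weightedEnergy_nonneg α (u 0)).trans (hB 0)
  set C := NNReal.sqrt (B / (1 - α).toNNReal)
  set p := (1 - α).toNNReal / 2
  have hp : 0 < p := by simp [p, hα1]
  have hholder n : HolderOnWith C p (u n) (Icc 0 1) :=
    holderOnWith_of_weightedEnergy_le hα0.le hα1 (hC1 n) (hB n)
  have hbdd n : ∀ t ∈ Icc (0 : ℝ) 1, |u n t| ≤ C := fun t ht ↦ by
    have hdist : dist t 0 ≤ 1 := by rw [Real.dist_eq, sub_zero, abs_of_nonneg ht.1]; exact ht.2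
    simpa [hbd0, Real.dist_eq] using (hholder n).dist_le_of_le ht ⟨le_rfl, zero_le_one⟩ hdist
  obtain ⟨ψ, hψ, hcauchy⟩ := exists_strictMono_uniformCauchySeqOn isCompact_Icc hbdd
    (HolderWith.uniformEquicontinuous hp fun n ↦ (hholder n).holderWith).equicontinuous
  refine ⟨ψ, hψ, fun ε hε ↦ ?_⟩
  obtain ⟨N, hN⟩ := Metric.uniformCauchySeqOn_iff.1 hcauchy (ε / 2) (half_pos hε)
  exact ⟨N, fun m hm k hk ↦ (sqrt_integral_Ioo_sq_le fun t ht ↦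
    (hN m hm k hk t (Ioo_subset_Icc_self ht)).le).trans_lt (half_lt_self hε)⟩

/-- **Compactness of the embedding `H¹₀(Λ;w) ↪ L²(Λ)`, sequential form**
(Lemma 3.2 of the paper), for `Λ = (0,1)` and `w(r) = r^α`. The Cauchy property is
stated for the `L²(0,1)` norms of differences. -/
theorem stmt_6 (α : ℝ) (hα : α ∈ Set.Ioo (0 : ℝ) 1) (u : ℕ → ℝ → ℝ)
    (hC1 : ∀ n, ContDiffOn ℝ 1 (u n) (Set.Icc 0 1))
    (hbd0 : ∀ n, u n 0 = 0)
    (hbd1 : ∀ n, u n 1 = 0)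
    (hbound : ∃ B : ℝ, ∀ n,
      (∫ r in Set.Ioo (0 : ℝ) 1, r ^ α * (deriv (u n) r) ^ 2) ≤ B) :
    ∃ ψ : ℕ → ℕ, StrictMono ψ ∧
      ∀ ε : ℝ, 0 < ε → ∃ N : ℕ, ∀ m ≥ N, ∀ k ≥ N,
        Real.sqrt (∫ r in Set.Ioo (0 : ℝ) 1, (u (ψ m) r - u (ψ k) r) ^ 2) < ε :=
  stmt_6_general α hα u hC1 hbd0 hbound
end

section
/- Let T > 0 and let E ⊂ (0,T) be a Lebesgue-measurable set with positive measure. Let ℓ ∈ (0,T) be a Lebesgue density point of E, i.e. |E ∩ (ℓ−r, ℓ+r)|/(2r) → 1 as r → 0⁺. Then for every q ∈ (0,1) there exists a strictly decreasing sequence (ℓ_m)_{m≥1} ⊂ (ℓ, T] converging to ℓ such that, for every m ≥ 1, ℓ_{m+1} − ℓ_{m+2} = q (ℓ_m − ℓ_{m+1}) and |E ∩ (ℓ_{m+1}, ℓ_m)| ≥ (ℓ_m − ℓ_{m+1})/3. -/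
/-!
Near a density point `ℓ` the set `E` fills a fraction `c` of `(ℓ - s, ℓ + s)` for all small `s`,
for any `c < 1`. Removing `(ℓ - s, ℓ + q s]`, of length `(1 + q) s`, leaves at least
`(2c - 1 - q) s` of `E` in `(ℓ + q s, ℓ + s)`, which is `(1 - q) s / 3` for `c = (2 + q) / 3`.
So the geometric sequence `ℓ + r qᵐ` works once `r` is small enough.
-/

open MeasureTheory Filter Set Topology

lemma volume_inter_Ioo_sub_le_volume_inter_Ioo (E : Set ℝ) (a b c : ℝ) :
    volume (E ∩ Ioo a c) - ENNReal.ofReal (b - a) ≤ volume (E ∩ Ioo b c) := by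
  rw [tsub_le_iff_right, ← Real.volume_Ioc]
  calc volume (E ∩ Ioo a c) ≤ volume (E ∩ Ioo b c ∪ Ioc a b) := by
        refine measure_mono fun x ⟨hxE, hax, hxc⟩ => ?_
        rcases le_or_gt x b with hxb | hbx
        · exact Or.inr ⟨hax, hxb⟩
        · exact Or.inl ⟨hxE, hbx, hxc⟩
    _ ≤ volume (E ∩ Ioo b c) + volume (Ioc a b) := measure_union_le _ _

lemma eventually_ofReal_mul_le_volume_inter_Ioo {E : Set ℝ} {ℓ c : ℝ}
    (hdensity : Tendsto (fun r : ℝ => volume (E ∩ Ioo (ℓ - r) (ℓ + r)) / ENNReal.ofReal (2 * r))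
      (𝓝[>] 0) (𝓝 1))
    (hc : c < 1) :
    ∀ᶠ s in 𝓝[>] 0, ENNReal.ofReal (c * (2 * s)) ≤ volume (E ∩ Ioo (ℓ - s) (ℓ + s)) := by
  filter_upwards [hdensity.eventually (eventually_gt_nhds (ENNReal.ofReal_lt_one.2 hc)),
    self_mem_nhdsWithin] with s hlt (hs : 0 < s)
  rw [ENNReal.ofReal_mul' (by positivity)]
  exact (ENNReal.le_div_iff_mul_le (.inl (by simpa using hs)) (.inl ENNReal.ofReal_ne_top)).1
    hlt.le

lemma ofReal_le_volume_inter_Ioo_of_dense {E : Set ℝ} {ℓ q s : ℝ} (hq : -1 ≤ q) (hs : 0 ≤ s)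
    (hdense : ENNReal.ofReal ((2 + q) / 3 * (2 * s)) ≤ volume (E ∩ Ioo (ℓ - s) (ℓ + s))) :
    ENNReal.ofReal ((s - q * s) / 3) ≤ volume (E ∩ Ioo (ℓ + q * s) (ℓ + s)) :=
  calc ENNReal.ofReal ((s - q * s) / 3)
      = ENNReal.ofReal ((2 + q) / 3 * (2 * s) - (ℓ + q * s - (ℓ - s))) := by ring_nf
    _ = ENNReal.ofReal ((2 + q) / 3 * (2 * s)) - ENNReal.ofReal (ℓ + q * s - (ℓ - s)) :=
        ENNReal.ofReal_sub _ (by nlinarith)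
    _ ≤ volume (E ∩ Ioo (ℓ - s) (ℓ + s)) - ENNReal.ofReal (ℓ + q * s - (ℓ - s)) :=
        tsub_le_tsub_right hdense _
    _ ≤ volume (E ∩ Ioo (ℓ + q * s) (ℓ + s)) :=
        volume_inter_Ioo_sub_le_volume_inter_Ioo _ _ _ _

/-- The paper's sequence `(ℓ_m)_{m ≥ 1}` is encoded as `l m = ℓ_{m+1}`. -/
theorem stmt_10_general (T : ℝ) (E : Set ℝ)
    (ℓ : ℝ) (hℓ : ℓ ∈ Set.Ioo 0 T)
    (hdensity : Filter.Tendsto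
      (fun r : ℝ => volume (E ∩ Set.Ioo (ℓ - r) (ℓ + r)) / ENNReal.ofReal (2 * r))
      (nhdsWithin 0 (Set.Ioi 0)) (nhds 1)) :
    ∀ q ∈ Set.Ioo (0 : ℝ) 1, ∃ l : ℕ → ℝ,
      StrictAnti l ∧
      (∀ m : ℕ, l m ∈ Set.Ioc ℓ T) ∧
      Filter.Tendsto l Filter.atTop (nhds ℓ) ∧
      (∀ m : ℕ, l (m + 1) - l (m + 2) = q * (l m - l (m + 1))) ∧
      (∀ m : ℕ, ENNReal.ofReal ((l m - l (m + 1)) / 3)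
        ≤ volume (E ∩ Set.Ioo (l (m + 1)) (l m))) := by
  rintro q ⟨hq0, hq1⟩
  obtain ⟨δ, hδ, hdense⟩ := mem_nhdsGT_iff_exists_Ioo_subset.1 <|
    eventually_ofReal_mul_le_volume_inter_Ioo (c := (2 + q) / 3) hdensity (by linarith)
  set r := min (δ / 2) (T - ℓ)
  have hr : 0 < r := lt_min (half_pos hδ) (sub_pos.2 hℓ.2)
  have hr_pow_le (m : ℕ) : r * q ^ m ≤ r :=
    mul_le_of_le_one_right hr.le (pow_le_one₀ hq0.le hq1.le)
  refine ⟨fun m => ℓ + r * q ^ m, fun a b hab => ?_, fun m => ⟨?_, ?_⟩, ?_, fun m => by ring,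
    fun m => ?_⟩
  · simpa using mul_lt_mul_of_pos_left (pow_lt_pow_right_of_lt_one₀ hq0 hq1 hab) hr
  · simpa using mul_pos hr (pow_pos hq0 m)
  · linarith [hr_pow_le m, min_le_right (δ / 2) (T - ℓ)]
  · simpa using ((tendsto_pow_atTop_nhds_zero_of_lt_one hq0.le hq1).const_mul r).const_add ℓ
  · have hs : r * q ^ m ∈ Ioo 0 δ :=
      ⟨by positivity, (hr_pow_le m).trans_lt ((min_le_left _ _).trans_lt (half_lt_self hδ))⟩
    convert ofReal_le_volume_inter_Ioo_of_dense (by linarith) hs.1.le (hdense hs) using 3 <;>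
      ring_nf

/-- **Telescoping sequence of intervals shrinking to a Lebesgue density point of a
measurable set** (Lemma 5.3 of the paper, after Liu–Wu–Yang–Zhang). The sequence
`(ℓ_m)_{m≥1}` of the paper is encoded as `l : ℕ → ℝ` with `l m = ℓ_{m+1}`. -/
theorem stmt_10 (T : ℝ) (hT : 0 < T) (E : Set ℝ) (hEmeas : MeasurableSet E)
    (hEsub : E ⊆ Set.Ioo 0 T) (hEpos : 0 < volume E)
    (ℓ : ℝ) (hℓ : ℓ ∈ Set.Ioo 0 T)
    (hdensity : Filter.Tendsto
      (fun r : ℝ => volume (E ∩ Set.Ioo (ℓ - r) (ℓ + r)) / ENNReal.ofReal (2 * r))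
      (nhdsWithin 0 (Set.Ioi 0)) (nhds 1)) :
    ∀ q ∈ Set.Ioo (0 : ℝ) 1, ∃ l : ℕ → ℝ,
      StrictAnti l ∧
      (∀ m : ℕ, l m ∈ Set.Ioc ℓ T) ∧
      Filter.Tendsto l Filter.atTop (nhds ℓ) ∧
      (∀ m : ℕ, l (m + 1) - l (m + 2) = q * (l m - l (m + 1))) ∧
      (∀ m : ℕ, ENNReal.ofReal ((l m - l (m + 1)) / 3)
        ≤ volume (E ∩ Set.Ioo (l (m + 1)) (l m))) :=
  stmt_10_general T E ℓ hℓ hdensity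
end
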